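/- arXiv:1404.7232 — 4 statements merged into one kernel-verified Lean document; each statement's English description precedes it below -/
import Mathlib

section
/- For every positive integer m, the coloring c of [3^m] defined by c(x) = m + 1 - v_3(x), where v_3(x) is the exponent of 3 in the prime factorization of x, is an exact (m+1)-coloring of [3^m] with no rainbow 3-term arithmetic progression. -/
open Finset

/-- An exact `r`-coloring of a finite set `S`: every element of `S` gets a color in
`{1,...,r}` and every color in `{1,...,r}` is used on `S`. -/
def ExactColoring {G : Type*} [AddCommGroup G] (S : Finset G) (r : ℕ) (c : G → ℕ) : Prop :=
  (∀ x ∈ S, c x ∈ Finset.Icc 1 r) ∧ ∀ j ∈ Finset.Icc 1 r, ∃ x ∈ S, c x = j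

/-- `S` contains a rainbow `k`-term arithmetic progression under the coloring `c`:
`k` distinct elements `a, a+d, ..., a+(k-1)d` of `S` on which `c` is injective. -/
def RainbowAP {G : Type*} [AddCommGroup G] (S : Finset G) (k : ℕ) (c : G → ℕ) : Prop :=
  ∃ a d : G, (∀ i < k, a + i • d ∈ S) ∧
    Function.Injective (fun i : Fin k => a + (i : ℕ) • d) ∧
    Function.Injective (fun i : Fin k => c (a + (i : ℕ) • d))

/-- The anti-van der Waerden number: the smallest `r` such that every exact
`r`-coloring of `S` contains a rainbow `k`-AP. -/
noncomputable def aw {G : Type*} [AddCommGroup G] (S : Finset G) (k : ℕ) : ℕ :=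
  sInf {r : ℕ | ∀ c : G → ℕ, ExactColoring S r c → RainbowAP S k c}

/-- `aw` for the interval `[n] = {1,...,n}` of integers. -/
noncomputable def awI (n : ℤ) (k : ℕ) : ℕ := aw (Finset.Icc 1 n) k

private instance stmt5_fact3 : Fact (Nat.Prime 3) := ⟨by norm_num⟩

private lemma stmt5_val_le {m : ℕ} {x : ℤ} (hx : x ∈ Finset.Icc 1 ((3:ℤ)^m)) :
    padicValInt 3 x ≤ m := by
  simp only [Finset.mem_Icc] at hx
  have hdvd : (3:ℤ) ^ padicValInt 3 x ∣ x := padicValInt_dvd x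
  have hle : (3:ℤ) ^ padicValInt 3 x ≤ x := Int.le_of_dvd (by linarith [hx.1]) hdvd
  have : (3:ℤ) ^ padicValInt 3 x ≤ (3:ℤ)^m := le_trans hle hx.2
  exact (pow_le_pow_iff_right₀ (by norm_num : (1:ℤ) < 3)).mp this

private lemma stmt5_collision (x y z : ℤ) (hx : x ≠ 0) (hy : y ≠ 0) (hz : z ≠ 0)
    (h : x + z = 2 * y) :
    padicValInt 3 x = padicValInt 3 y ∨ padicValInt 3 y = padicValInt 3 z ∨
      padicValInt 3 x = padicValInt 3 z := by
  by_contra hc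
  push_neg at hc
  obtain ⟨h1, h2, h3⟩ := hc
  have hq : ((x:ℚ)) + (z:ℚ) = 2 * (y:ℚ) := by exact_mod_cast h
  have hqx : (x:ℚ) ≠ 0 := Int.cast_ne_zero.mpr hx
  have hqy : (y:ℚ) ≠ 0 := Int.cast_ne_zero.mpr hy
  have hqz : (z:ℚ) ≠ 0 := Int.cast_ne_zero.mpr hz
  have hxz : (x:ℚ) + z ≠ 0 := by rw [hq]; exact mul_ne_zero two_ne_zero hqy
  have hvx : padicValRat 3 (x:ℚ) = padicValInt 3 x := padicValRat.of_int
  have hvy : padicValRat 3 (y:ℚ) = padicValInt 3 y := padicValRat.of_int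
  have hvz : padicValRat 3 (z:ℚ) = padicValInt 3 z := padicValRat.of_int
  have hxzval : padicValRat 3 (x:ℚ) ≠ padicValRat 3 (z:ℚ) := by
    rw [hvx, hvz]; exact_mod_cast h3
  have hmin := padicValRat.add_eq_min (p := 3) hxz hqx hqz hxzval
  have hv2 : padicValRat 3 (2:ℚ) = 0 := by
    rw [show (2:ℚ) = ((2:ℤ):ℚ) by norm_num, padicValRat.of_int,
      padicValInt.eq_zero_of_not_dvd (by decide)]
    simp
  have h2y : padicValRat 3 (2 * (y:ℚ)) = padicValRat 3 (y:ℚ) := by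
    rw [padicValRat.mul two_ne_zero hqy, hv2, zero_add]
  rw [hq, h2y] at hmin
  rcases min_cases (padicValRat 3 (x:ℚ)) (padicValRat 3 (z:ℚ)) with ⟨he, _⟩ | ⟨he, _⟩
  · rw [he] at hmin
    exact h1 (by exact_mod_cast (hvx ▸ hvy ▸ hmin).symm)
  · rw [he] at hmin
    exact h2 (by exact_mod_cast (hvy ▸ hvz ▸ hmin))

theorem stmt5 (m : ℕ) (hm : 0 < m) :
    ExactColoring (Finset.Icc 1 ((3 : ℤ) ^ m)) (m + 1)
      (fun x : ℤ => m + 1 - padicValInt 3 x) ∧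
    ¬ RainbowAP (Finset.Icc 1 ((3 : ℤ) ^ m)) 3
      (fun x : ℤ => m + 1 - padicValInt 3 x) := by
  constructor
  · constructor
    · intro x hx
      have hv := stmt5_val_le hx
      simp only [Finset.mem_Icc]
      omega
    · intro j hj
      simp only [Finset.mem_Icc] at hj
      refine ⟨(3:ℤ) ^ (m + 1 - j), ?_, ?_⟩
      · simp only [Finset.mem_Icc]
        constructor
        · exact one_le_pow₀ (by norm_num)
        · exact pow_le_pow_right₀ (by norm_num) (by omega)
      · have hval : padicValInt 3 ((3:ℤ) ^ (m + 1 - j)) = m + 1 - j := by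
          rw [show (3:ℤ) ^ (m + 1 - j) = ((3 ^ (m + 1 - j) : ℕ) : ℤ) by push_cast; ring,
            padicValInt.of_nat, padicValNat.prime_pow]
        show m + 1 - padicValInt 3 ((3:ℤ) ^ (m + 1 - j)) = j
        rw [hval]; omega
  · rintro ⟨a, d, hmem, hinj, hcinj⟩
    have ha : a ∈ Finset.Icc 1 ((3:ℤ)^m) := by
      have := hmem 0 (by norm_num); simpa using this
    have hb : a + d ∈ Finset.Icc 1 ((3:ℤ)^m) := by
      have := hmem 1 (by norm_num); simpa using this
    have hc : a + 2 * d ∈ Finset.Icc 1 ((3:ℤ)^m) := by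
      have := hmem 2 (by norm_num)
      simpa [two_smul, two_mul, add_assoc] using this
    have hane : a ≠ 0 := by
      simp only [Finset.mem_Icc] at ha; intro h; omega
    have hbne : a + d ≠ 0 := by
      simp only [Finset.mem_Icc] at hb; intro h; omega
    have hcne : a + 2 * d ≠ 0 := by
      simp only [Finset.mem_Icc] at hc; intro h; omega
    have hrel : a + (a + 2 * d) = 2 * (a + d) := by ring
    have key := stmt5_collision a (a + d) (a + 2 * d) hane hbne hcne hrel
    have e0 : a + ((0 : Fin 3) : ℕ) • d = a := by simp
    have e1 : a + ((1 : Fin 3) : ℕ) • d = a + d := by simp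
    have e2 : a + ((2 : Fin 3) : ℕ) • d = a + 2 * d := by
      show a + (2 : ℕ) • d = a + 2 * d
      simp [two_smul, two_mul]
    rcases key with h | h | h
    · have : (0 : Fin 3) = 1 := hcinj (by simp only [e0, e1, h])
      simp at this
    · have : (1 : Fin 3) = 2 := hcinj (by simp only [e1, e2, h])
      simp at this
    · have : (0 : Fin 3) = 2 := hcinj (by simp only [e0, e2, h])
      simp at this
end

section
/- Let c be an exact r-coloring of [n] with no rainbow 3-AP, and for i ∈ [r] let b_i be the least x such that c restricted to [x] uses exactly i colors. Then b_{i+1} ≥ 2·b_i for all i ∈ [r-1], and consequently b_j ≥ 2^{j-i}·b_i for all 1 ≤ i ≤ j ≤ r. -/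
open Finset

theorem stmt6 (n r : ℕ) (hn : 0 < n) (c : ℤ → ℕ)
    (hc : ExactColoring (Finset.Icc 1 (n : ℤ)) r c)
    (hnr : ¬ RainbowAP (Finset.Icc 1 (n : ℤ)) 3 c)
    (b : ℕ → ℕ)
    (hb : ∀ i, 1 ≤ i → i ≤ r →
      ((Finset.Icc 1 ((b i : ℤ))).image c).card = i ∧
      ∀ y < b i, ((Finset.Icc 1 ((y : ℤ))).image c).card ≠ i) :
    (∀ i, 1 ≤ i → i + 1 ≤ r → b (i + 1) ≥ 2 * b i) ∧
    (∀ i j, 1 ≤ i → i ≤ j → j ≤ r → b j ≥ 2 ^ (j - i) * b i) := by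
  -- monotonicity of images
  have hmono : ∀ {x y : ℤ}, x ≤ y →
      (Finset.Icc 1 x).image c ⊆ (Finset.Icc 1 y).image c := by
    intro x y h
    exact Finset.image_subset_image (Finset.Icc_subset_Icc le_rfl h)
  -- b i ≥ 1
  have hb1 : ∀ i, 1 ≤ i → i ≤ r → 1 ≤ b i := by
    intro i hi hir
    by_contra h
    have hbi0 : b i = 0 := by omega
    have := (hb i hi hir).1
    rw [hbi0] at this
    simp at this
    omega
  -- new color appears at b i
  have hnew : ∀ i, 1 ≤ i → i ≤ r → ∀ z : ℤ, 1 ≤ z → z < (b i : ℤ) → c z ≠ c (b i : ℤ) := by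
    intro i hi hir z hz1 hz2 hcz
    obtain ⟨h1, h2⟩ := hb i hi hir
    have hB1 : 1 ≤ b i := hb1 i hi hir
    have hsub : (Finset.Icc 1 ((b i : ℤ))).image c ⊆
        (Finset.Icc 1 (((b i - 1 : ℕ) : ℤ))).image c := by
      intro w hw
      obtain ⟨u, hu, hcu⟩ := Finset.mem_image.mp hw
      rw [Finset.mem_Icc] at hu
      have hcast : ((b i - 1 : ℕ) : ℤ) = (b i : ℤ) - 1 := by push_cast [hB1]; ring
      rcases lt_or_eq_of_le hu.2 with h | h
      · exact Finset.mem_image.mpr ⟨u, by rw [Finset.mem_Icc]; omega, hcu⟩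
      · refine Finset.mem_image.mpr ⟨z, by rw [Finset.mem_Icc]; omega, ?_⟩
        rw [hcz, ← h, hcu]
    have hle1 := Finset.card_le_card (hmono (show (((b i - 1 : ℕ) : ℤ)) ≤ (b i : ℤ) by
      push_cast [hB1]; omega))
    have hge1 := Finset.card_le_card hsub
    rw [h1] at hle1 hge1
    exact h2 (b i - 1) (by omega) (by omega)
  -- card of image on [1,n] is r
  have hcardn : ((Finset.Icc 1 (n : ℤ)).image c).card = r := by
    have himg : (Finset.Icc 1 (n : ℤ)).image c = Finset.Icc 1 r := by
      apply Finset.Subset.antisymm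
      · intro j hj
        obtain ⟨x, hx, hcx⟩ := Finset.mem_image.mp hj
        exact hcx ▸ hc.1 x hx
      · intro j hj
        obtain ⟨x, hx, hcx⟩ := hc.2 j hj
        exact Finset.mem_image.mpr ⟨x, hx, hcx⟩
    rw [himg, Nat.card_Icc]
    omega
  -- b i ≤ n
  have hble : ∀ i, 1 ≤ i → i ≤ r → b i ≤ n := by
    intro i hi hir
    by_contra h
    push_neg at h
    obtain ⟨h1, h2⟩ := hb i hi hir
    have hsub : (Finset.Icc 1 (n : ℤ)).image c ⊆ (Finset.Icc 1 ((b i : ℤ))).image c :=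
      hmono (by exact_mod_cast h.le)
    have : r ≤ i := by rw [← h1, ← hcardn]; exact Finset.card_le_card hsub
    have hir' : i = r := le_antisymm hir this
    exact h2 n h (by rw [hcardn, hir'])
  -- strict monotonicity
  have hlt : ∀ i, 1 ≤ i → i + 1 ≤ r → b i < b (i + 1) := by
    intro i hi hir
    by_contra h
    push_neg at h
    have h1 := (hb i hi (by omega)).1
    have h2 := (hb (i + 1) (by omega) hir).1
    have hcc := Finset.card_le_card (hmono (show ((b (i+1) : ℤ)) ≤ (b i : ℤ) by exact_mod_cast h))
    rw [h1, h2] at hcc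
    omega
  -- main step
  have main : ∀ i, 1 ≤ i → i + 1 ≤ r → 2 * b i ≤ b (i + 1) := by
    intro i hi hir
    by_contra hcon
    push_neg at hcon
    set Y : ℤ := (b i : ℤ) with hY
    set X : ℤ := (b (i + 1) : ℤ) with hX
    have hY1 : 1 ≤ Y := by rw [hY]; exact_mod_cast hb1 i hi (by omega)
    have hYX : Y < X := by rw [hY, hX]; exact_mod_cast hlt i hi hir
    have hXn : X ≤ (n : ℤ) := by rw [hX]; exact_mod_cast hble (i + 1) (by omega) hir
    have hX2Y : X < 2 * Y := by rw [hX, hY]; exact_mod_cast hcon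
    have hd : X - Y ≠ 0 := by omega
    have hcY := hnew i hi (by omega)
    have hcX := hnew (i + 1) (by omega) hir
    apply hnr
    refine ⟨2 * Y - X, X - Y, ?_, ?_, ?_⟩
    · intro k hk
      interval_cases k <;>
        simp only [Finset.mem_Icc, nsmul_eq_mul, Nat.cast_ofNat, Nat.cast_one,
          Nat.cast_zero, zero_mul, one_mul, add_zero] <;> constructor <;> push_cast <;> omega
    · intro k l h
      simp only at h
      have h' := add_left_cancel h
      rw [nsmul_eq_mul, nsmul_eq_mul] at h'
      have : ((k : ℕ) : ℤ) = ((l : ℕ) : ℤ) := mul_right_cancel₀ hd h'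
      exact Fin.ext (by exact_mod_cast this)
    · have e0 : 2 * Y - X + (0 : ℕ) • (X - Y) = 2 * Y - X := by simp
      have e1 : 2 * Y - X + (1 : ℕ) • (X - Y) = Y := by simp; ring
      have e2 : 2 * Y - X + (2 : ℕ) • (X - Y) = X := by
        rw [nsmul_eq_mul]; push_cast; ring
      have d1 : c (2 * Y - X) ≠ c Y := hcY (2 * Y - X) (by omega) (by omega)
      have d2 : c (2 * Y - X) ≠ c X := hcX (2 * Y - X) (by omega) (by omega)
      have d3 : c Y ≠ c X := hcX Y hY1 hYX
      intro k l h
      simp only at h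
      fin_cases k <;> fin_cases l <;>
        simp only [Fin.isValue, Fin.val_zero, Fin.val_one, Fin.val_two, e0, e1, e2] at h ⊢ <;>
        first
          | rfl
          | exact absurd h d1 | exact absurd h d2 | exact absurd h d3
          | exact absurd h.symm d1 | exact absurd h.symm d2 | exact absurd h.symm d3
  refine ⟨fun i hi hir => main i hi hir, ?_⟩
  intro i j hi hij hjr
  induction j, hij using Nat.le_induction with
  | base => simp
  | succ j hij ih =>
    have h1 : 1 ≤ j := le_trans hi hij
    have h2 : 2 * b j ≤ b (j + 1) := main j h1 hjr
    have h3 : 2 ^ (j - i) * b i ≤ b j := ih (by omega)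
    have : j + 1 - i = (j - i) + 1 := by omega
    rw [this, pow_succ]
    calc 2 ^ (j - i) * 2 * b i = 2 * (2 ^ (j - i) * b i) := by ring
    _ ≤ 2 * b j := by omega
    _ ≤ b (j + 1) := h2
end

section
/- The Behrend set S_ℓ(m,d), consisting of integers a_x = Σ_{i=1}^m x_i (2d-1)^{i-1} over vectors x ∈ {0,...,d-1}^m with ‖x‖² = ℓ, contains no 3-term arithmetic progression. -/
open Finset

/-- The Behrend set `S_ℓ(m,d)`: integers `∑ x i * (2d-1)^i` over vectors
`x ∈ {0,...,d-1}^m` with `∑ (x i)^2 = ℓ`. -/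
def behrendSet (m ℓ d : ℕ) : Set ℕ :=
  {a | ∃ x : Fin m → ℕ, (∀ i, x i < d) ∧ (∑ i, (x i) ^ 2 = ℓ) ∧
    a = ∑ i, x i * (2 * d - 1) ^ (i : ℕ)}

/-- Uniqueness of base-`B` digit expansions. -/
lemma behrend_digits_unique (B : ℕ) : ∀ (m : ℕ) (u v : Fin m → ℕ),
    (∀ i, u i < B) → (∀ i, v i < B) →
    (∑ i, u i * B ^ (i : ℕ)) = (∑ i, v i * B ^ (i : ℕ)) → ∀ i, u i = v i := by
  intro m
  induction m with
  | zero => intro u v _ _ _ i; exact i.elim0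
  | succ n ih =>
    intro u v hu hv h i
    rw [Fin.sum_univ_succ, Fin.sum_univ_succ] at h
    have hB : 0 < B := lt_of_le_of_lt (Nat.zero_le _) (hu 0)
    have h' : u 0 + B * ∑ i : Fin n, u i.succ * B ^ (i : ℕ)
        = v 0 + B * ∑ i : Fin n, v i.succ * B ^ (i : ℕ) := by
      have eu : ∑ i : Fin n, u i.succ * B ^ ((i : ℕ) + 1)
          = B * ∑ i : Fin n, u i.succ * B ^ (i : ℕ) := by
        rw [Finset.mul_sum]
        exact Finset.sum_congr rfl fun i _ => by rw [pow_succ]; ring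
      have ev : ∑ i : Fin n, v i.succ * B ^ ((i : ℕ) + 1)
          = B * ∑ i : Fin n, v i.succ * B ^ (i : ℕ) := by
        rw [Finset.mul_sum]
        exact Finset.sum_congr rfl fun i _ => by rw [pow_succ]; ring
      simp only [Fin.val_succ] at h
      rw [eu, ev] at h
      simpa using h
    have h0 : u 0 = v 0 := by
      have := congrArg (· % B) h'
      simpa [Nat.add_mul_mod_self_left, Nat.mod_eq_of_lt (hu 0),
        Nat.mod_eq_of_lt (hv 0)] using this
    have htail : (∑ i : Fin n, u i.succ * B ^ (i : ℕ))
        = ∑ i : Fin n, v i.succ * B ^ (i : ℕ) := by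
      have : B * (∑ i : Fin n, u i.succ * B ^ (i : ℕ))
          = B * ∑ i : Fin n, v i.succ * B ^ (i : ℕ) := by omega
      exact Nat.eq_of_mul_eq_mul_left hB this
    refine Fin.cases h0 (fun j => ?_) i
    exact ih (fun i => u i.succ) (fun i => v i.succ) (fun i => hu i.succ)
      (fun i => hv i.succ) htail j

theorem stmt10 (m ℓ d : ℕ) (hm : 0 < m) (hℓ : 0 < ℓ) (hd : 0 < d)
    (a e : ℕ) (he : 1 ≤ e) :
    ¬ (a ∈ behrendSet m ℓ d ∧ a + e ∈ behrendSet m ℓ d ∧ a + 2 * e ∈ behrendSet m ℓ d) := by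
  rintro ⟨⟨x, hx, hxl, hxa⟩, ⟨y, hy, hyl, hya⟩, ⟨z, hz, hzl, hza⟩⟩
  set B := 2 * d - 1 with hB
  -- a + (a + 2e) = 2(a + e)
  have hsum : (∑ i, (x i + z i) * B ^ (i : ℕ)) = ∑ i, (2 * y i) * B ^ (i : ℕ) := by
    have h1 : (∑ i, x i * B ^ (i : ℕ)) + (∑ i, z i * B ^ (i : ℕ))
        = 2 * ∑ i, y i * B ^ (i : ℕ) := by omega
    calc (∑ i, (x i + z i) * B ^ (i : ℕ))
        = (∑ i, x i * B ^ (i : ℕ)) + (∑ i, z i * B ^ (i : ℕ)) := by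
          rw [← Finset.sum_add_distrib]; exact Finset.sum_congr rfl fun i _ => by ring
      _ = 2 * ∑ i, y i * B ^ (i : ℕ) := h1
      _ = ∑ i, (2 * y i) * B ^ (i : ℕ) := by
          rw [Finset.mul_sum]; exact Finset.sum_congr rfl fun i _ => by ring
  have hdig : ∀ i, x i + z i = 2 * y i :=
    behrend_digits_unique B m _ _ (fun i => by have := hx i; have := hz i; omega)
      (fun i => by have := hy i; omega) hsum
  -- sum of squares of differences is zero
  have hzero : ∑ i, ((x i : ℤ) - z i) ^ 2 = 0 := by
    have e1 : ∀ i ∈ Finset.univ (α := Fin m), ((x i : ℤ) - z i) ^ 2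
        = 2 * (x i : ℤ) ^ 2 + 2 * (z i : ℤ) ^ 2 - (2 * (y i : ℤ)) ^ 2 := by
      intro i _
      have h2 : (x i : ℤ) + z i = 2 * y i := by exact_mod_cast hdig i
      nlinarith [h2]
    rw [Finset.sum_congr rfl e1]
    have cx : ∑ i, (x i : ℤ) ^ 2 = (ℓ : ℤ) := by exact_mod_cast congrArg (Nat.cast : ℕ → ℤ) hxl
    have cy : ∑ i, (y i : ℤ) ^ 2 = (ℓ : ℤ) := by exact_mod_cast congrArg (Nat.cast : ℕ → ℤ) hyl
    have cz : ∑ i, (z i : ℤ) ^ 2 = (ℓ : ℤ) := by exact_mod_cast congrArg (Nat.cast : ℕ → ℤ) hzl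
    have : ∑ i, (2 * (x i : ℤ) ^ 2 + 2 * (z i : ℤ) ^ 2 - (2 * (y i : ℤ)) ^ 2)
        = 2 * (∑ i, (x i : ℤ) ^ 2) + 2 * (∑ i, (z i : ℤ) ^ 2) - 4 * (∑ i, (y i : ℤ) ^ 2) := by
      rw [Finset.sum_sub_distrib, Finset.sum_add_distrib, ← Finset.mul_sum, ← Finset.mul_sum]
      congr 1
      rw [Finset.mul_sum]
      exact Finset.sum_congr rfl fun i _ => by ring
    rw [this, cx, cy, cz]; ring
  have hxz : ∀ i, x i = z i := by
    intro i
    have h3 := (Finset.sum_eq_zero_iff_of_nonneg (fun i _ => sq_nonneg ((x i : ℤ) - z i))).1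
      hzero i (Finset.mem_univ i)
    have : (x i : ℤ) = z i := by nlinarith [h3]
    exact_mod_cast this
  have : (∑ i, x i * B ^ (i : ℕ)) = ∑ i, z i * B ^ (i : ℕ) :=
    Finset.sum_congr rfl fun i _ => by rw [hxz i]
  omega
end

section
/- Let s be odd and let c be a coloring of Z_{st} with no rainbow 3-AP. For 0 ≤ i ≤ s-1 let P_i = {c(ℓ) : ℓ ∈ Z_{st}, ℓ ≡ i (mod s)} be the residue palettes modulo s, and let m be an index maximizing |P_m|. Then |P_i \ P_m| ≤ 1 for all i. -/
open Finset

/-! ### Auxiliary lemmas -/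

lemma fin3_inj {X : Type*} {f : Fin 3 → X} (h01 : f 0 ≠ f 1) (h02 : f 0 ≠ f 2)
    (h12 : f 1 ≠ f 2) : Function.Injective f := by
  intro i j hij
  fin_cases i <;> fin_cases j <;> simp_all

/-- Consequence of having no rainbow 3-AP: any three distinct elements in
arithmetic progression have two equal colors. -/
lemma nr_of {n : ℕ} [NeZero n] (c : ZMod n → ℕ)
    (hnr : ¬ RainbowAP (Finset.univ : Finset (ZMod n)) 3 c)
    (x y z : ZMod n) (hap : x + z = y + y) (hxy : x ≠ y) (hxz : x ≠ z) :
    c x = c y ∨ c x = c z ∨ c y = c z := by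
  by_contra h
  push_neg at h
  obtain ⟨h1, h2, h3⟩ := h
  apply hnr
  have hyz : y ≠ z := by
    intro h
    apply hxy
    rw [← h] at hap
    exact add_right_cancel hap
  have g0 : x + ((0 : Fin 3) : ℕ) • (y - x) = x := by simp
  have g1 : x + ((1 : Fin 3) : ℕ) • (y - x) = y := by simp
  have g2 : x + ((2 : Fin 3) : ℕ) • (y - x) = z := by
    have h2' : ((2 : Fin 3) : ℕ) = 2 := rfl
    rw [h2', two_nsmul]
    linear_combination -hap
  refine ⟨x, y - x, fun i _ => mem_univ _, fin3_inj ?_ ?_ ?_, fin3_inj ?_ ?_ ?_⟩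
  · show x + ((0 : Fin 3) : ℕ) • (y - x) ≠ x + ((1 : Fin 3) : ℕ) • (y - x)
    rw [g0, g1]; exact hxy
  · show x + ((0 : Fin 3) : ℕ) • (y - x) ≠ x + ((2 : Fin 3) : ℕ) • (y - x)
    rw [g0, g2]; exact hxz
  · show x + ((1 : Fin 3) : ℕ) • (y - x) ≠ x + ((2 : Fin 3) : ℕ) • (y - x)
    rw [g1, g2]; exact hyz
  · show c (x + ((0 : Fin 3) : ℕ) • (y - x)) ≠ c (x + ((1 : Fin 3) : ℕ) • (y - x))
    rw [g0, g1]; exact h1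
  · show c (x + ((0 : Fin 3) : ℕ) • (y - x)) ≠ c (x + ((2 : Fin 3) : ℕ) • (y - x))
    rw [g0, g2]; exact h2
  · show c (x + ((1 : Fin 3) : ℕ) • (y - x)) ≠ c (x + ((2 : Fin 3) : ℕ) • (y - x))
    rw [g1, g2]; exact h3

/-- The palette of colors used on the residue class `r` modulo `s`. -/
def QS (s t : ℕ) [NeZero (s * t)] (c : ZMod (s * t) → ℕ) (r : ZMod s) : Finset ℕ :=
  (Finset.univ.filter
    (fun j : ZMod (s * t) => ZMod.castHom (dvd_mul_right s t) (ZMod s) j = r)).image c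

lemma mem_QS {s t : ℕ} [NeZero (s * t)] {c : ZMod (s * t) → ℕ} {r : ZMod s} {a : ℕ} :
    a ∈ QS s t c r ↔
      ∃ j : ZMod (s * t), ZMod.castHom (dvd_mul_right s t) (ZMod s) j = r ∧ c j = a := by
  simp only [QS, Finset.mem_image, Finset.mem_filter, Finset.mem_univ, true_and]

/-- The key reflection lemma: if two elements of distinct colors in class `q` have colors
avoiding the palette of class `p`, then the palette of class `2q - p` equals that of `p`. -/
lemma key_lemma {s t : ℕ} [NeZero (s * t)] (hs : Odd s) (c : ZMod (s * t) → ℕ)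
    (nr : ∀ x y z : ZMod (s * t), x + z = y + y → x ≠ y → x ≠ z →
      c x = c y ∨ c x = c z ∨ c y = c z)
    (p q : ZMod s) (hpq : p ≠ q) (x y : ZMod (s * t))
    (hx : ZMod.castHom (dvd_mul_right s t) (ZMod s) x = q)
    (hy : ZMod.castHom (dvd_mul_right s t) (ZMod s) y = q)
    (hxy : c x ≠ c y)
    (hxP : c x ∉ QS s t c p) (hyP : c y ∉ QS s t c p) :
    QS s t c (2 * q - p) = QS s t c p := by
  haveI : NeZero s := ⟨fun h => (NeZero.ne (s * t)) (by rw [h, zero_mul])⟩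
  set φ := ZMod.castHom (dvd_mul_right s t) (ZMod s) with hφ
  have hu2 : IsUnit (2 : ZMod s) := by
    have := (ZMod.isUnit_iff_coprime 2 s).mpr (Nat.coprime_two_left.mpr hs)
    simpa using this
  have cancel2 : ∀ a b : ZMod s, 2 * a = 2 * b → a = b := fun a b h =>
    hu2.mul_left_cancel h
  have main : ∀ v : ZMod (s * t), φ v = 2 * q - p → c v = c (x + x - v) := by
    intro v hv
    have hc1 : φ (x + x - v) = p := by rw [map_sub, map_add, hx, hv]; ring
    have hc2 : φ (y + y - v) = p := by rw [map_sub, map_add, hy, hv]; ring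
    have hmem1 : c (x + x - v) ∈ QS s t c p := mem_QS.mpr ⟨_, hc1, rfl⟩
    have hmem2 : c (y + y - v) ∈ QS s t c p := mem_QS.mpr ⟨_, hc2, rfl⟩
    have hvx : v ≠ x := by
      intro h
      rw [h, hx] at hv
      exact hpq (by linear_combination hv)
    have hvy : v ≠ y := by
      intro h
      rw [h, hy] at hv
      exact hpq (by linear_combination hv)
    have hvu1 : v ≠ x + x - v := by
      intro h
      have : (2 : ZMod s) * q = 2 * p := by
        have := congrArg φ h
        rw [hv, hc1] at this
        linear_combination this
      exact hpq ((cancel2 _ _ this).symm)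
    have hvu2 : v ≠ y + y - v := by
      intro h
      have : (2 : ZMod s) * q = 2 * p := by
        have := congrArg φ h
        rw [hv, hc2] at this
        linear_combination this
      exact hpq ((cancel2 _ _ this).symm)
    have h1 := nr v x (x + x - v) (by ring) hvx hvu1
    have h2 := nr v y (y + y - v) (by ring) hvy hvu2
    rcases h1 with h1 | h1 | h1
    · -- c v = c x
      rcases h2 with h2 | h2 | h2
      · exact absurd (h1.symm.trans h2) hxy
      · exact absurd (by rw [h1.symm.trans h2]; exact hmem2) hxP
      · exact absurd (by rw [h2]; exact hmem2) hyP
    · exact h1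
    · exact absurd (by rw [h1]; exact hmem1) hxP
  ext a
  simp only [mem_QS]
  constructor
  · rintro ⟨v, hv, rfl⟩
    exact ⟨x + x - v, by rw [map_sub, map_add, hx, hv]; ring, (main v hv).symm⟩
  · rintro ⟨u, hu, rfl⟩
    have hcls : φ (x + x - u) = 2 * q - p := by rw [map_sub, map_add, hx, hu]; ring
    refine ⟨x + x - u, hcls, ?_⟩
    have := main (x + x - u) hcls
    rwa [show x + x - (x + x - u) = u by ring] at this

/-- The alternating palette chain. -/
lemma chain_lemma {s t : ℕ} [NeZero (s * t)] (hs : Odd s) (c : ZMod (s * t) → ℕ)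
    (nr : ∀ x y z : ZMod (s * t), x + z = y + y → x ≠ y → x ≠ z →
      c x = c y ∨ c x = c z ∨ c y = c z)
    (p q : ZMod s) (hpq : p ≠ q)
    (α β γ δ : ℕ)
    (hα : α ∈ QS s t c q) (hα' : α ∉ QS s t c p)
    (hβ : β ∈ QS s t c q) (hβ' : β ∉ QS s t c p) (hαβ : α ≠ β)
    (hγ : γ ∈ QS s t c p) (hγ' : γ ∉ QS s t c q)
    (hδ : δ ∈ QS s t c p) (hδ' : δ ∉ QS s t c q) (hγδ : γ ≠ δ) :
    ∀ n : ℕ, QS s t c (p + (2 * n) • (q - p)) = QS s t c p ∧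
      QS s t c (p + (2 * n + 1) • (q - p)) = QS s t c q := by
  have hd : q - p ≠ 0 := sub_ne_zero.mpr (Ne.symm hpq)
  intro n
  induction n with
  | zero =>
    constructor
    · rw [show p + (2 * 0) • (q - p) = p by push_cast [nsmul_eq_mul]; ring]
    · rw [show p + (2 * 0 + 1) • (q - p) = q by push_cast [nsmul_eq_mul]; ring]
  | succ n ih =>
    obtain ⟨hA, hB⟩ := ih
    -- step 1 : palette of p + (2n+2) • d equals QS p
    obtain ⟨x, hxcls, hxc⟩ := mem_QS.mp (hB.symm ▸ hα)
    obtain ⟨y, hycls, hyc⟩ := mem_QS.mp (hB.symm ▸ hβ)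
    have hne1 : p + (2 * n) • (q - p) ≠ p + (2 * n + 1) • (q - p) := by
      intro h
      apply hd
      have h' := add_left_cancel h
      have hmul : ((2 * n : ℕ) : ZMod s) * (q - p) = ((2 * n + 1 : ℕ) : ZMod s) * (q - p) := by
        rw [← nsmul_eq_mul, ← nsmul_eq_mul]; exact h'
      push_cast at hmul
      linear_combination -hmul
    have step1 := key_lemma hs c nr (p + (2 * n) • (q - p)) (p + (2 * n + 1) • (q - p))
      hne1 x y hxcls hycls
      (by rw [hxc, hyc]; exact hαβ)
      (by rw [hxc, hA]; exact hα')
      (by rw [hyc, hA]; exact hβ')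
    have e1 : 2 * (p + (2 * n + 1) • (q - p)) - (p + (2 * n) • (q - p))
        = p + (2 * (n + 1)) • (q - p) := by push_cast [nsmul_eq_mul]; ring
    have hstep1 : QS s t c (p + (2 * (n + 1)) • (q - p)) = QS s t c p := by
      rw [← e1, step1, hA]
    -- step 2 : palette of p + (2n+3) • d equals QS q
    obtain ⟨z, hzcls, hzc⟩ := mem_QS.mp (hstep1.symm ▸ hγ)
    obtain ⟨w, hwcls, hwc⟩ := mem_QS.mp (hstep1.symm ▸ hδ)
    have hne2 : p + (2 * n + 1) • (q - p) ≠ p + (2 * (n + 1)) • (q - p) := by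
      intro h
      apply hd
      have h' := add_left_cancel h
      have : ((2 * n + 1 : ℕ) : ZMod s) * (q - p) = ((2 * (n + 1) : ℕ) : ZMod s) * (q - p) := by
        rw [← nsmul_eq_mul, ← nsmul_eq_mul]; exact h'
      push_cast at this
      linear_combination -this
    have step2 := key_lemma hs c nr (p + (2 * n + 1) • (q - p)) (p + (2 * (n + 1)) • (q - p))
      hne2 z w hzcls hwcls
      (by rw [hzc, hwc]; exact hγδ)
      (by rw [hzc, hB]; exact hγ')
      (by rw [hwc, hB]; exact hδ')
    have e2 : 2 * (p + (2 * (n + 1)) • (q - p)) - (p + (2 * n + 1) • (q - p))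
        = p + (2 * (n + 1) + 1) • (q - p) := by push_cast [nsmul_eq_mul]; ring
    have hstep2 : QS s t c (p + (2 * (n + 1) + 1) • (q - p)) = QS s t c q := by
      rw [← e2, step2, hB]
    exact ⟨hstep1, hstep2⟩

theorem stmt17 (s t : ℕ) (hs : Odd s) (hs0 : 0 < s) (ht : 0 < t) [NeZero (s * t)]
    (c : ZMod (s * t) → ℕ)
    (hnr : ¬ RainbowAP (Finset.univ : Finset (ZMod (s * t))) 3 c)
    (P : ℕ → Finset ℕ)
    (hP : ∀ i, P i = (Finset.univ.filter (fun j : ZMod (s * t) => (ZMod.val j) % s = i)).image c)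
    (m : ℕ) (hm : m < s) (hmax : ∀ i < s, (P i).card ≤ (P m).card) :
    ∀ i < s, ((P i) \ (P m)).card ≤ 1 := by
  haveI : NeZero s := ⟨hs0.ne'⟩
  intro i hi
  by_contra hcard
  push_neg at hcard
  have nr := nr_of c hnr
  -- translation of P into QS
  have hPQ : ∀ j : ℕ, j < s → P j = QS s t c (j : ZMod s) := by
    intro j hj
    rw [hP j]
    unfold QS
    congr 1
    apply Finset.filter_congr
    intro x _
    have hx : ZMod.castHom (dvd_mul_right s t) (ZMod s) x = ((x.val : ℕ) : ZMod s) := by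
      conv_lhs => rw [← ZMod.natCast_zmod_val x]
      rw [map_natCast]
    constructor
    · intro h
      rw [hx, ← ZMod.natCast_mod x.val s, h]
    · intro h
      have := congrArg ZMod.val h
      rw [hx, ZMod.val_natCast, ZMod.val_natCast, Nat.mod_eq_of_lt hj] at this
      exact this
  have him : i ≠ m := by
    rintro rfl
    rw [sdiff_self] at hcard
    simp at hcard
  obtain ⟨α, hα, β, hβ, hαβ⟩ := Finset.one_lt_card.mp hcard
  have h2 : 1 < (P m \ P i).card := by
    have e1 := card_sdiff_add_card_inter (P i) (P m)
    have e2 := card_sdiff_add_card_inter (P m) (P i)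
    rw [inter_comm] at e2
    have := hmax i hi
    omega
  obtain ⟨γ, hγ, δ, hδ, hγδ⟩ := Finset.one_lt_card.mp h2
  rw [mem_sdiff] at hα hβ hγ hδ
  have hpq : (m : ZMod s) ≠ (i : ZMod s) := by
    intro h
    apply him
    have := congrArg ZMod.val h
    rw [ZMod.val_natCast_of_lt hm, ZMod.val_natCast_of_lt hi] at this
    exact this.symm
  have hQi := hPQ i hi
  have hQm := hPQ m hm
  have hchain := chain_lemma hs c nr (m : ZMod s) (i : ZMod s) hpq α β γ δ
    (by rw [← hQi]; exact hα.1) (by rw [← hQm]; exact hα.2)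
    (by rw [← hQi]; exact hβ.1) (by rw [← hQm]; exact hβ.2) hαβ
    (by rw [← hQm]; exact hγ.1) (by rw [← hQi]; exact hγ.2)
    (by rw [← hQm]; exact hδ.1) (by rw [← hQi]; exact hδ.2) hγδ
  obtain ⟨k, hk⟩ := hs
  have hfix : (m : ZMod s) + (2 * k + 1) • ((i : ZMod s) - (m : ZMod s)) = (m : ZMod s) := by
    rw [nsmul_eq_mul, show ((2 * k + 1 : ℕ) : ZMod s) = ((s : ℕ) : ZMod s) by rw [hk],
      ZMod.natCast_self, zero_mul, add_zero]
  have hQQ := (hchain k).2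
  rw [hfix] at hQQ
  -- now QS at class m equals QS at class i
  have hmem : α ∈ QS s t c (m : ZMod s) := by rw [hQQ, ← hQi]; exact hα.1
  rw [← hQm] at hmem
  exact hα.2 hmem
end
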